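/- arXiv:2411.16904 — 3 statements merged into one kernel-verified Lean document; each statement's English description precedes it below -/
import Mathlib

section
/- Let n ≥ 4 be an integer divisible by 4 and let ζ be a complex n-th root of unity. Then ζ is a root of the polynomial 3x^{3 + n/2} + 3x^{1 + n/2} + 2x^4 + 2x^2 + 2 if and only if ζ = -1. -/
open Polynomial in
lemma aux_int (ζ : ℂ) (n : ℕ) (hn : n ≠ 0) (hζ : ζ ^ n = 1) : IsIntegral ℤ ζ := by
  refine ⟨X ^ n - C 1, ?_, ?_⟩
  · simpa using monic_X_pow_sub_C (1 : ℤ) hn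
  · simp [hζ]

lemma aux_quad (ζ : ℂ) (n : ℕ) (hn : n ≠ 0) (hζ : ζ ^ n = 1) (a : ℤ) (ha : Odd a)
    (h : 2 * ζ ^ 2 + (a : ℂ) * ζ + 2 = 0) : False := by
  have hζ0 : ζ ≠ 0 := by
    intro h0
    rw [h0, zero_pow hn] at hζ
    exact zero_ne_one hζ
  have hmul : ζ ^ (n - 1) * ζ = 1 := by
    rw [← pow_succ, Nat.sub_add_cancel (Nat.one_le_iff_ne_zero.mpr hn), hζ]
  have hinv : ζ ^ (n - 1) = ζ⁻¹ := eq_inv_of_mul_eq_one_left hmul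
  have hsum : ζ + ζ ^ (n - 1) = algebraMap ℚ ℂ (-a / 2) := by
    rw [hinv, eq_ratCast]
    field_simp
    push_cast
    linear_combination (1/2 : ℂ) * h
  have hint : IsIntegral ℤ (ζ + ζ ^ (n - 1)) :=
    (aux_int ζ n hn hζ).add ((aux_int ζ n hn hζ).pow _)
  rw [hsum, isIntegral_algebraMap_iff (algebraMap ℚ ℂ).injective] at hint
  obtain ⟨y, hy⟩ := IsIntegrallyClosed.isIntegral_iff.mp hint
  have h2 : (2 * y : ℚ) = -a := by
    rw [show ((y : ℤ) : ℚ) = algebraMap ℤ ℚ y from rfl] at *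
    rw [hy]; ring
  have h3 : (2 * y : ℤ) = -a := by exact_mod_cast h2
  obtain ⟨k, hk⟩ := ha
  omega

theorem stmt_12 (n : ℕ) (hn : 4 ≤ n) (hdvd : 4 ∣ n) (ζ : ℂ) (hζ : ζ ^ n = 1) :
    3 * ζ ^ (3 + n / 2) + 3 * ζ ^ (1 + n / 2) + 2 * ζ ^ 4 + 2 * ζ ^ 2 + 2 = 0 ↔ ζ = -1 := by
  have hn0 : n ≠ 0 := by omega
  constructor
  · intro h
    rw [pow_add, pow_add] at h
    have h2 : n / 2 * 2 = n := Nat.div_mul_cancel (dvd_trans ⟨2, rfl⟩ hdvd)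
    have hw2 : (ζ ^ (n / 2) - 1) * (ζ ^ (n / 2) + 1) = 0 := by
      have : (ζ ^ (n / 2)) ^ 2 = 1 := by rw [← pow_mul, h2, hζ]
      linear_combination this
    rcases mul_eq_zero.mp hw2 with hw | hw
    · have hw : ζ ^ (n / 2) = 1 := by linear_combination hw
      have hfac : (ζ + 1) ^ 2 * (2 * ζ ^ 2 - ζ + 2) = 0 := by
        linear_combination h - (3 * ζ ^ 3 + 3 * ζ) * hw
      rcases mul_eq_zero.mp hfac with hc | hc
      · have h1 : ζ + 1 = 0 := (pow_eq_zero_iff two_ne_zero).mp hc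
        linear_combination h1
      · exact (aux_quad ζ n hn0 hζ (-1) ⟨-1, by ring⟩
          (by push_cast; linear_combination hc)).elim
    · have hw : ζ ^ (n / 2) = -1 := by linear_combination hw
      have hfac : (ζ - 1) ^ 2 * (2 * ζ ^ 2 + ζ + 2) = 0 := by
        linear_combination h - (3 * ζ ^ 3 + 3 * ζ) * hw
      rcases mul_eq_zero.mp hfac with hc | hc
      · have h1 : ζ = 1 := by
          have := (pow_eq_zero_iff two_ne_zero).mp hc
          linear_combination this
        rw [h1, one_pow] at hw
        norm_num at hw
      · exact (aux_quad ζ n hn0 hζ 1 ⟨0, by ring⟩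
          (by push_cast; linear_combination hc)).elim
  · rintro rfl
    obtain ⟨k, rfl⟩ := hdvd
    have hd : 4 * k / 2 = 2 * k := by omega
    rw [hd, Odd.neg_one_pow (n := 3 + 2 * k) ⟨1 + k, by ring⟩,
      Odd.neg_one_pow (n := 1 + 2 * k) ⟨k, by ring⟩]
    norm_num
end

section
/- Let n ≥ 6 be an integer with n ≡ 2 (mod 4) and let ζ be a complex n-th root of unity. Then ζ is a root of the polynomial 3x^{6 + n/2} + 3x^{2 + n/2} + 2x^8 + 2x^4 + 2 if and only if ζ = -1. -/
/-!
Put `m = n / 2`, which is odd, and `ε = ζ ^ m`, so `ε ^ 2 = 1` and `ζ ^ (k + m) = ε ζ ^ k`. With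
`w = ζ ^ 2` the equation becomes `2w⁴ + 3εw³ + 2w² + 3εw + 2 = (2w² - εw + 2)(w + ε)² = 0`.
The quadratic factor has no root of unity as a root: such a root would give
`(w + w⁻¹)² = 1/4`, an algebraic integer that is not an integer. Hence `ζ ^ 2 = -ε`; since `m` is
odd and `(ζ ^ 2) ^ 2 = 1`, this gives `ζ ^ 2 = (ζ ^ 2) ^ m = 1`, and then `ζ = ζ ^ m = ε = -1`.
-/

theorem pow_eq_self_of_sq_eq_one {M : Type*} [Monoid M] {x : M} (hx : x ^ 2 = 1) {m : ℕ}
    (hm : Odd m) : x ^ m = x := by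
  obtain ⟨j, rfl⟩ := hm
  rw [pow_succ, pow_mul, hx, one_pow, one_mul]

section RootOfUnity

variable {K : Type*} [Field K] {z : K} {N : ℕ}

theorem isIntegral_add_inv_of_pow_eq_one (hN : N ≠ 0) (hz : z ^ N = 1) :
    IsIntegral ℤ (z + z⁻¹) := by
  have integral_of_pow_eq_one {x : K} (hx : x ^ N = 1) : IsIntegral ℤ x :=
    .of_pow (Nat.pos_of_ne_zero hN) (hx ▸ isIntegral_one)
  exact (integral_of_pow_eq_one hz).add (integral_of_pow_eq_one (by rw [inv_pow, hz, inv_one]))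

theorem two_mul_sq_sub_mul_add_two_ne_zero_of_pow_eq_one [CharZero K] {ε : K} (hN : N ≠ 0)
    (hz : z ^ N = 1) (hε : ε ^ 2 = 1) : 2 * z ^ 2 - ε * z + 2 ≠ 0 := by
  intro h
  have hz0 : z ≠ 0 := by
    rintro rfl
    simp [zero_pow hN] at hz
  have hsq : (z + z⁻¹) ^ 2 = ((1 / 4 : ℚ) : K) := by
    have hsum : z + z⁻¹ = ε / 2 := by
      field_simp
      linear_combination h
    rw [hsum, div_pow, hε]
    norm_num
  obtain ⟨k, hk⟩ := ((isIntegral_add_inv_of_pow_eq_one hN hz).pow 2).exists_int_iff_exists_rat.mp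
    ⟨_, hsq⟩
  have : (4 * k : ℤ) = 1 := by
    rw [hsq] at hk
    exact_mod_cast (by rw [← hk]; norm_num : (4 * k : K) = 1)
  omega

end RootOfUnity

theorem stmt_13_general (n : ℕ) (hmod : n % 4 = 2) (ζ : ℂ) (hζ : ζ ^ n = 1) :
    3 * ζ ^ (6 + n / 2) + 3 * ζ ^ (2 + n / 2) + 2 * ζ ^ 8 + 2 * ζ ^ 4 + 2 = 0 ↔ ζ = -1 := by
  set m := n / 2
  have hm : Odd m := Nat.odd_iff.mpr (by omega)
  have hsq_pow : (ζ ^ 2) ^ m = 1 := by rw [← pow_mul, ← hζ]; congr 1; omega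
  set ε := ζ ^ m
  have hε : ε ^ 2 = 1 := by rw [← pow_mul, mul_comm, pow_mul, hsq_pow]
  constructor
  · intro h
    have hfac : (2 * (ζ ^ 2) ^ 2 - ε * ζ ^ 2 + 2) * (ζ ^ 2 + ε) ^ 2 = 0 := by
      rw [pow_add, pow_add] at h
      linear_combination h + (2 - ε * ζ ^ 2) * hε
    have hw : ζ ^ 2 = -ε := by
      refine eq_neg_of_add_eq_zero_left (pow_eq_zero_iff two_ne_zero |>.mp ?_)
      exact (mul_eq_zero.mp hfac).resolve_left
        (two_mul_sq_sub_mul_add_two_ne_zero_of_pow_eq_one hm.pos.ne' hsq_pow hε)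
    have hζ_sq : ζ ^ 2 = 1 :=
      (pow_eq_self_of_sq_eq_one (x := ζ ^ 2) (by rw [hw, neg_sq, hε]) hm).symm.trans hsq_pow
    calc ζ = ε := (pow_eq_self_of_sq_eq_one hζ_sq hm).symm
      _ = -1 := by linear_combination hw - hζ_sq
  · rintro rfl
    rw [((by decide : Even 6).add_odd hm).neg_one_pow, (even_two.add_odd hm).neg_one_pow]
    norm_num

theorem stmt_13 (n : ℕ) (hn : 6 ≤ n) (hmod : n % 4 = 2) (ζ : ℂ) (hζ : ζ ^ n = 1) :
    3 * ζ ^ (6 + n / 2) + 3 * ζ ^ (2 + n / 2) + 2 * ζ ^ 8 + 2 * ζ ^ 4 + 2 = 0 ↔ ζ = -1 :=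
  stmt_13_general n hmod ζ hζ
end

section
/- Let n ≥ 6 be an integer with n ≡ 2 (mod 4) and let ζ be a complex n-th root of unity. Then ζ is a root of the polynomial x^8 + 2x^6 + 2x^2 + 1 + 2x^{6 + n/2} + 2x^{4 + n/2} + 2x^{2 + n/2} if and only if ζ = -1. -/
theorem stmt_14 (n : ℕ) (hn : 6 ≤ n) (hmod : n % 4 = 2) (ζ : ℂ) (hζ : ζ ^ n = 1) :
    ζ ^ 8 + 2 * ζ ^ 6 + 2 * ζ ^ 2 + 1 + 2 * ζ ^ (6 + n / 2) + 2 * ζ ^ (4 + n / 2) +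
        2 * ζ ^ (2 + n / 2) = 0 ↔ ζ = -1 := by
  set m := n / 2 with hm
  have hn2 : n = 2 * m := by omega
  have hmodd : m % 2 = 1 := by omega
  have hmo : Odd m := Nat.odd_iff.mpr hmodd
  have hζ2 : (ζ ^ m) ^ 2 = 1 := by
    rw [← pow_mul, mul_comm, ← hn2]; exact hζ
  have hw : ζ ^ m = 1 ∨ ζ ^ m = -1 := by
    have h0 : (ζ ^ m - 1) * (ζ ^ m + 1) = 0 := by linear_combination hζ2
    rcases mul_eq_zero.mp h0 with h | h
    · left; linear_combination h
    · right; linear_combination h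
  constructor
  · intro h
    rw [pow_add, pow_add, pow_add] at h
    rcases hw with hw | hw
    · exfalso
      have key : (ζ ^ 4 + 1) * (ζ ^ 4 + 4 * ζ ^ 2 + 1) = 0 := by
        linear_combination h - (2 * ζ ^ 6 + 2 * ζ ^ 4 + 2 * ζ ^ 2) * hw
      rcases mul_eq_zero.mp key with h4 | h4
      · have h1 : ((-1 : ℂ)) ^ m = 1 := by
          have : ζ ^ 4 = -1 := by linear_combination h4
          calc ((-1 : ℂ)) ^ m = (ζ ^ 4) ^ m := by rw [this]
            _ = (ζ ^ m) ^ 4 := by rw [← pow_mul, mul_comm, pow_mul]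
            _ = 1 := by rw [hw]; norm_num
        rw [hmo.neg_one_pow] at h1
        norm_num at h1
      · have habs : ‖ζ‖ = 1 := by
          simpa using
            Complex.norm_eq_one_of_pow_eq_one hζ (by omega)
        have he : ζ ^ 4 + 1 = -(4 * ζ ^ 2) := by linear_combination h4
        have heq : ‖ζ ^ 4 + 1‖ = 4 := by
          rw [he, norm_neg, norm_mul, norm_pow, habs]
          norm_num
        have hle : ‖ζ ^ 4 + 1‖ ≤ 2 := by
          calc ‖ζ ^ 4 + 1‖ ≤ ‖ζ ^ 4‖ + ‖(1 : ℂ)‖ :=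
                norm_add_le _ _
            _ = 2 := by rw [norm_pow, habs, norm_one]; norm_num
        rw [heq] at hle
        norm_num at hle
    · have key : (ζ ^ 4 - 1) ^ 2 = 0 := by
        linear_combination h - (2 * ζ ^ 6 + 2 * ζ ^ 4 + 2 * ζ ^ 2) * hw
      have h4 : ζ ^ 4 = 1 := by
        have := pow_eq_zero_iff (n := 2) (by norm_num) |>.mp key
        linear_combination this
      have hr : ζ ^ (m % 4) = -1 := by
        calc ζ ^ (m % 4) = (ζ ^ 4) ^ (m / 4) * ζ ^ (m % 4) := by
              rw [h4, one_pow, one_mul]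
          _ = ζ ^ (4 * (m / 4) + m % 4) := by rw [pow_add, pow_mul]
          _ = ζ ^ m := by rw [Nat.div_add_mod]
          _ = -1 := hw
      have hm4 : m % 4 = 1 ∨ m % 4 = 3 := by omega
      rcases hm4 with e | e
      · rw [e, pow_one] at hr; exact hr
      · rw [e] at hr
        linear_combination ζ * hr - h4
  · intro h
    subst h
    have h6 : Odd (6 + m) := Even.add_odd (by decide) hmo
    have h4 : Odd (4 + m) := Even.add_odd (by decide) hmo
    have h2 : Odd (2 + m) := Even.add_odd (by decide) hmo
    rw [h6.neg_one_pow, h4.neg_one_pow, h2.neg_one_pow]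
    norm_num
end
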